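/- For all integers k ≥ 2 and m with 1 ≤ m ≤ k, the following identity holds in ℝ: Σ_{ℓ=0}^{m−1} (1/((ℓ+2)(ℓ+1)))·C(m−1, ℓ)·(1/k)^ℓ·((k−1)/k)^{m−1−ℓ} = (k/((m+1)·m))·(k − (k+m)·((k−1)/k)^m). -/

import Mathlib

open Finset

/-- For all integers `k ≥ 2` and `1 ≤ m ≤ k`,
`Σ_{ℓ=0}^{m−1} (1/((ℓ+2)(ℓ+1)))·C(m−1,ℓ)·(1/k)^ℓ·((k−1)/k)^{m−1−ℓ}
 = (k/((m+1)m))·(k − (k+m)·((k−1)/k)^m)`. -/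
theorem binomial_sum_identity_two (k m : ℕ) (hk : 2 ≤ k) (hm₁ : 1 ≤ m) (hm₂ : m ≤ k) :
    ∑ ℓ ∈ Finset.range m, (1 / (((ℓ : ℝ) + 2) * ((ℓ : ℝ) + 1))) * ((m - 1).choose ℓ : ℝ) *
        (1 / (k : ℝ)) ^ ℓ * (((k : ℝ) - 1) / k) ^ (m - 1 - ℓ) =
      ((k : ℝ) / (((m : ℝ) + 1) * m)) * ((k : ℝ) - ((k : ℝ) + m) * (((k : ℝ) - 1) / k) ^ m) := by
  obtain ⟨n, rfl⟩ : ∃ n, m = n + 1 := ⟨m - 1, (Nat.succ_pred_eq_of_pos hm₁).symm⟩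
  have hk0 : (k : ℝ) ≠ 0 := by
    have : (0:ℝ) < k := by exact_mod_cast Nat.lt_of_lt_of_le Nat.zero_lt_two hk
    exact ne_of_gt this
  set x : ℝ := 1 / (k : ℝ) with hx
  set y : ℝ := ((k : ℝ) - 1) / k with hy
  have hx0 : x ≠ 0 := one_div_ne_zero hk0
  have hxy : x + y = 1 := by
    rw [hx, hy]; field_simp; ring
  clear_value x y
  -- binomial theorem
  have hbin : ∑ j ∈ range (n + 3), x ^ j * y ^ (n + 2 - j) * ((n + 2).choose j : ℝ) = 1 := by
    have h := add_pow x y (n + 2)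
    rw [hxy, one_pow] at h
    exact h.symm
  rw [Finset.sum_range_succ', Finset.sum_range_succ'] at hbin
  -- per-term nat identity
  have natkey : ∀ ℓ : ℕ, (ℓ + 2) * (ℓ + 1) * ((n + 2).choose (ℓ + 2))
      = (n + 2) * ((n + 1) * n.choose ℓ) := by
    intro ℓ
    have h1 := Nat.add_one_mul_choose_eq (n + 1) (ℓ + 1)
    have h2 := Nat.add_one_mul_choose_eq n ℓ
    calc (ℓ + 2) * (ℓ + 1) * ((n + 2).choose (ℓ + 2))
        = ((n + 2).choose (ℓ + 2) * (ℓ + 2)) * (ℓ + 1) := by ring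
      _ = ((n + 2) * (n + 1).choose (ℓ + 1)) * (ℓ + 1) := by rw [← h1]
      _ = (n + 2) * ((n + 1).choose (ℓ + 1) * (ℓ + 1)) := by ring
      _ = (n + 2) * ((n + 1) * n.choose ℓ) := by rw [← h2]
  have key : ∀ ℓ ∈ range (n + 1),
      (1 / (((ℓ : ℝ) + 2) * ((ℓ : ℝ) + 1))) * ((n + 1 - 1).choose ℓ : ℝ)
        * x ^ ℓ * y ^ (n + 1 - 1 - ℓ)
      = (x ^ (ℓ + 1 + 1) * y ^ (n + 2 - (ℓ + 1 + 1)) * ((n + 2).choose (ℓ + 1 + 1) : ℝ))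
          / (((n : ℝ) + 2) * ((n : ℝ) + 1) * x ^ 2) := by
    intro ℓ hℓ
    rw [Finset.mem_range] at hℓ
    have hcast : (((ℓ : ℝ) + 2) * ((ℓ : ℝ) + 1)) * (((n + 2).choose (ℓ + 2) : ℝ))
        = ((n : ℝ) + 2) * (((n : ℝ) + 1) * (n.choose ℓ : ℝ)) := by
      exact_mod_cast congrArg (Nat.cast (R := ℝ)) (natkey ℓ)
    have hl2 : ((ℓ : ℝ) + 2) * ((ℓ : ℝ) + 1) ≠ 0 := by positivity
    have hn2 : ((n : ℝ) + 2) * ((n : ℝ) + 1) ≠ 0 := by positivity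
    have he : n + 2 - (ℓ + 1 + 1) = n - ℓ := by omega
    have he2 : n + 1 - 1 - ℓ = n - ℓ := by omega
    simp only [Nat.add_sub_cancel, he, he2]
    rw [pow_add, pow_add]
    field_simp
    linear_combination (-(y ^ (n - ℓ))) * hcast
  rw [Finset.sum_congr rfl key, ← Finset.sum_div]
  have hS : (∑ ℓ ∈ range (n + 1),
      x ^ (ℓ + 1 + 1) * y ^ (n + 2 - (ℓ + 1 + 1)) * ((n + 2).choose (ℓ + 1 + 1) : ℝ))
      = 1 - x ^ (0 + 1) * y ^ (n + 2 - (0 + 1)) * ((n + 2).choose (0 + 1) : ℝ)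
        - x ^ 0 * y ^ (n + 2 - 0) * ((n + 2).choose 0 : ℝ) := by
    linarith [hbin]
  rw [hS]
  simp only [Nat.choose_one_right, Nat.choose_zero_right, pow_zero, pow_one, one_mul,
    Nat.cast_one, mul_one, Nat.add_sub_cancel, Nat.sub_zero]
  rw [hx, hy]
  push_cast [Nat.choose_one_right]
  field_simp
  rw [pow_succ _ (n + 1)]
  field_simp
  ring
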